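/- arXiv:1902.10822 — 4 statements merged into one kernel-verified Lean document; each statement's English description precedes it below -/
import Mathlib

section
/- For any odd positive integer k = 2k̃+1, the integral of the absolute value of the k-th Hermite polynomial against the standard normal density satisfies ∫_{-∞}^{∞} |H_k(t)| φ(t) dt ≤ (2k̃+1)!! · 2^{k̃}. -/
open MeasureTheory Real Polynomial

/-- The standard normal density. -/
noncomputable def stdGauss (t : ℝ) : ℝ := (Real.sqrt (2 * Real.pi))⁻¹ * Real.exp (-t ^ 2 / 2)

namespace StdGaussAux

open Nat Finset

lemma pow_factorial_le_doubleFactorial (j : ℕ) : 2 ^ j * j ! ≤ (2 * j + 1)‼ := by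
  induction j with
  | zero => simp
  | succ j ih =>
    have h : 2 * (j + 1) + 1 = (2 * j + 1) + 2 := by ring
    rw [h, Nat.doubleFactorial_add_two]
    calc 2 ^ (j+1) * (j+1)! = (2 * j + 2) * (2 ^ j * j !) := by
          rw [Nat.factorial_succ]; ring
      _ ≤ (2 * j + 1 + 2) * (2 * j + 1)‼ :=
          Nat.mul_le_mul (by omega) ih

lemma fact_eq_df (k : ℕ) : k ! = k‼ * (k - 1)‼ := by
  cases k with
  | zero => simp
  | succ k => simpa using Nat.factorial_eq_mul_doubleFactorial k

lemma df_identity (n j : ℕ) (h : j ≤ n) :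
    (2 * (n - j) - 1)‼ * Nat.choose (2 * n + 1) (2 * j + 1) * (2 * j + 1)‼ =
      (2 * n + 1)‼ * Nat.choose n j := by
  set m := n - j with hm
  have hn : n = j + m := by omega
  apply Nat.eq_of_mul_eq_mul_right (show 0 < (2*j)‼ * (2*m)‼ from
    Nat.mul_pos (Nat.doubleFactorial_pos _) (Nat.doubleFactorial_pos _))
  have e1 : (2*(n-j)-1)‼ * Nat.choose (2*n+1) (2*j+1) * (2*j+1)‼ * ((2*j)‼ * (2*m)‼)
      = Nat.choose (2*n+1) (2*j+1) * (2*j+1)! * (2*m)! := by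
    rw [fact_eq_df (2*m), Nat.factorial_eq_mul_doubleFactorial (2*j)]
    rw [← hm]; ring
  have e2 : (2*n+1)‼ * Nat.choose n j * ((2*j)‼ * (2*m)‼)
      = (2*n+1)! := by
    rw [Nat.doubleFactorial_two_mul, Nat.doubleFactorial_two_mul]
    have hc : Nat.choose n j * j ! * m ! = n ! := by
      rw [hm]; exact Nat.choose_mul_factorial_mul_factorial h
    have h2 : (2*n+1)! = (2*n+1)‼ * (2^n * n !) := by
      rw [← Nat.doubleFactorial_two_mul, ← Nat.factorial_eq_mul_doubleFactorial]
    rw [h2, ← hc, hn]; ring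
  rw [e1, e2]
  have h2 : 2*m = (2*n+1) - (2*j+1) := by omega
  rw [h2]
  exact Nat.choose_mul_factorial_mul_factorial (by omega)

lemma key_nat (n j : ℕ) (h : j ≤ n) :
    (2 * (n - j) - 1)‼ * Nat.choose (2 * n + 1) (2 * j + 1) * (2 ^ j * j !) ≤
      (2 * n + 1)‼ * Nat.choose n j := by
  calc (2 * (n - j) - 1)‼ * Nat.choose (2 * n + 1) (2 * j + 1) * (2 ^ j * j !)
      ≤ (2 * (n - j) - 1)‼ * Nat.choose (2 * n + 1) (2 * j + 1) * (2 * j + 1)‼ :=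
        Nat.mul_le_mul_left _ (pow_factorial_le_doubleFactorial j)
    _ = (2 * n + 1)‼ * Nat.choose n j := df_identity n j h

lemma stdGauss_nonneg (t : ℝ) : 0 ≤ stdGauss t := by
  unfold stdGauss; positivity

lemma stdGauss_abs (t : ℝ) : stdGauss |t| = stdGauss t := by
  unfold stdGauss; rw [sq_abs]

lemma continuous_stdGauss : Continuous stdGauss := by
  unfold stdGauss; continuity

lemma integrable_pow_gauss (n : ℕ) :
    Integrable (fun t : ℝ => t ^ n * Real.exp (-t ^ 2 / 2)) := by
  have h := integrable_rpow_mul_exp_neg_mul_sq (b := 1/2) (by norm_num)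
    (s := (n : ℝ)) (lt_of_lt_of_le neg_one_lt_zero (Nat.cast_nonneg n))
  have : (fun t : ℝ => t ^ n * Real.exp (-t ^ 2 / 2))
      = fun t : ℝ => t ^ (n : ℝ) * Real.exp (-(1/2) * t ^ 2) := by
    funext t; rw [Real.rpow_natCast]; ring_nf
  rw [this]; exact h

lemma integrable_abs_pow_stdGauss (n : ℕ) :
    Integrable (fun t : ℝ => |t| ^ n * stdGauss t) := by
  have h := ((integrable_pow_gauss n).abs).const_mul (Real.sqrt (2 * Real.pi))⁻¹
  have : (fun t : ℝ => |t| ^ n * stdGauss t)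
      = fun t => (Real.sqrt (2 * Real.pi))⁻¹ * |t ^ n * Real.exp (-t ^ 2 / 2)| := by
    funext t
    rw [abs_mul, abs_pow, abs_of_pos (Real.exp_pos _)]
    unfold stdGauss; ring
  rw [this]; exact h

lemma gauss_moment (j : ℕ) :
    ∫ t : ℝ, |t| ^ (2 * j + 1) * stdGauss t ≤ 2 ^ j * j ! := by
  have h1 : ∫ t : ℝ, |t| ^ (2 * j + 1) * stdGauss t
      = 2 * ∫ x in Set.Ioi (0:ℝ), x ^ (2 * j + 1) * stdGauss x := by
    rw [← integral_comp_abs (f := fun x => x ^ (2 * j + 1) * stdGauss x)]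
    congr 1; funext t; rw [stdGauss_abs]
  have h2 : ∫ x in Set.Ioi (0:ℝ), x ^ (2 * j + 1) * stdGauss x
      = (Real.sqrt (2 * Real.pi))⁻¹ * (2 ^ j * j !) := by
    have e : ∀ x ∈ Set.Ioi (0:ℝ), x ^ (2 * j + 1) * stdGauss x
        = (Real.sqrt (2 * Real.pi))⁻¹ *
          (x ^ ((2 * j + 1 : ℕ) : ℝ) * Real.exp (-(1/2) * x ^ (2:ℝ))) := by
      intro x hx
      rw [Real.rpow_natCast, Real.rpow_two]
      unfold stdGauss; ring_nf
    rw [setIntegral_congr_fun measurableSet_Ioi e, integral_const_mul]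
    congr 1
    rw [integral_rpow_mul_exp_neg_mul_rpow (by norm_num)
      (lt_of_lt_of_le neg_one_lt_zero (Nat.cast_nonneg _)) (by norm_num)]
    have hq : (((2 * j + 1 : ℕ) : ℝ) + 1) / 2 = (j : ℝ) + 1 := by push_cast; ring
    rw [hq]
    rw [Real.Gamma_nat_eq_factorial j]
    have hb : ((1:ℝ)/2) ^ (-(((2 * j + 1 : ℕ) : ℝ) + 1) / 2) = 2 ^ (j+1 : ℕ) := by
      have : (-(((2 * j + 1 : ℕ) : ℝ) + 1) / 2) = -((j+1 : ℕ) : ℝ) := by push_cast; ring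
      rw [this, one_div, Real.inv_rpow (by norm_num), Real.rpow_neg (by norm_num),
        inv_inv, Real.rpow_natCast]
    rw [hb]
    ring
  rw [h1, h2]
  have h3 : 2 * (Real.sqrt (2 * Real.pi))⁻¹ ≤ 1 := by
    have hs : (2:ℝ) ≤ Real.sqrt (2 * Real.pi) := by
      rw [Real.le_sqrt (by norm_num) (by positivity)]
      nlinarith [Real.pi_gt_three]
    have hpos : (0:ℝ) < Real.sqrt (2 * Real.pi) := by positivity
    calc 2 * (Real.sqrt (2 * Real.pi))⁻¹ ≤ Real.sqrt (2 * Real.pi) * (Real.sqrt (2 * Real.pi))⁻¹ :=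
        mul_le_mul_of_nonneg_right hs (by positivity)
      _ = 1 := mul_inv_cancel₀ (ne_of_gt hpos)
  calc 2 * ((Real.sqrt (2 * Real.pi))⁻¹ * (2 ^ j * j !))
      = (2 * (Real.sqrt (2 * Real.pi))⁻¹) * (2 ^ j * j !) := by ring
    _ ≤ 1 * (2 ^ j * j !) := by
        apply mul_le_mul_of_nonneg_right h3; positivity
    _ = 2 ^ j * j ! := one_mul _

lemma sum_range_two_mul {M : Type*} [AddCommMonoid M] (m : ℕ) (f : ℕ → M) :
    ∑ i ∈ Finset.range (2 * m), f i = ∑ j ∈ Finset.range m, (f (2 * j) + f (2 * j + 1)) := by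
  induction m with
  | zero => simp
  | succ m ih =>
    rw [Finset.sum_range_succ, ← ih, show 2 * (m + 1) = (2 * m + 1) + 1 by ring,
      Finset.sum_range_succ, Finset.sum_range_succ, add_assoc]

lemma herm_abs_le (n : ℕ) (t : ℝ) :
    |(Polynomial.aeval t (Polynomial.hermite (2 * n + 1)) : ℝ)| ≤
      ∑ j ∈ Finset.range (n + 1),
        (((2 * (n - j) - 1)‼ * Nat.choose (2 * n + 1) (2 * j + 1) : ℕ) : ℝ) * |t| ^ (2 * j + 1) := by
  have he : (Polynomial.aeval t (Polynomial.hermite (2 * n + 1)) : ℝ)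
      = ∑ i ∈ Finset.range (2 * (n + 1)), ((Polynomial.hermite (2 * n + 1)).coeff i : ℝ) * t ^ i := by
    rw [Polynomial.aeval_eq_sum_range' (n := 2 * (n + 1))
      (by rw [Polynomial.natDegree_hermite]; omega) t]
    simp [zsmul_eq_mul]
  calc |(Polynomial.aeval t (Polynomial.hermite (2 * n + 1)) : ℝ)|
      ≤ ∑ i ∈ Finset.range (2 * (n + 1)), |((Polynomial.hermite (2 * n + 1)).coeff i : ℝ)| * |t| ^ i := by
        rw [he]
        refine (Finset.abs_sum_le_sum_abs _ _).trans ?_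
        apply le_of_eq
        refine Finset.sum_congr rfl fun i _ => ?_
        rw [abs_mul, abs_pow]
    _ = ∑ j ∈ Finset.range (n + 1),
        (((2 * (n - j) - 1)‼ * Nat.choose (2 * n + 1) (2 * j + 1) : ℕ) : ℝ) * |t| ^ (2 * j + 1) := by
        rw [sum_range_two_mul]
        refine Finset.sum_congr rfl fun j hj => ?_
        have hj' : j ≤ n := by simpa using Nat.lt_succ_iff.mp (Finset.mem_range.mp hj)
        have hz : (Polynomial.hermite (2 * n + 1)).coeff (2 * j) = 0 :=
          Polynomial.coeff_hermite_of_odd_add (by refine ⟨n + j, by ring⟩)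
        have hc : (Polynomial.hermite (2 * n + 1)).coeff (2 * j + 1)
            = (-1) ^ (n - j) * ((2 * (n - j) - 1)‼ : ℤ) * (Nat.choose (2 * n + 1) (2 * j + 1) : ℤ) := by
          have h2 : 2 * n + 1 = 2 * (n - j) + (2 * j + 1) := by omega
          rw [h2, Polynomial.coeff_hermite_explicit, ← h2]
        rw [hz, hc]
        push_cast
        simp only [abs_zero, zero_mul, zero_add, abs_mul, abs_pow, abs_neg, abs_one,
          one_pow, one_mul, Nat.abs_cast]

end StdGaussAux

open StdGaussAux Nat Finset

/-- For odd `k = 2kt + 1`, `∫ |H_k(t)| φ(t) dt ≤ (2kt+1)‼ · 2^kt`, where `H_k` is the `k`-th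
probabilists' Hermite polynomial. -/
theorem stmt_2 (kt : ℕ) :
    ∫ t : ℝ, |(Polynomial.aeval t (Polynomial.hermite (2 * kt + 1)) : ℝ)| * stdGauss t ≤
      (Nat.doubleFactorial (2 * kt + 1) : ℝ) * 2 ^ kt := by
  set n := kt with hn
  set c : ℕ → ℝ := fun j => (((2 * (n - j) - 1)‼ * Nat.choose (2 * n + 1) (2 * j + 1) : ℕ) : ℝ)
    with hcdef
  have hcnn : ∀ j, 0 ≤ c j := fun j => Nat.cast_nonneg _
  set g : ℕ → ℝ → ℝ := fun j t => |t| ^ (2 * j + 1) * stdGauss t with hgdef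
  have hgint : ∀ j, Integrable (g j) := fun j => integrable_abs_pow_stdGauss (2 * j + 1)
  set B : ℝ → ℝ := fun t => ∑ j ∈ Finset.range (n + 1), c j * g j t with hBdef
  have hBint : Integrable B := by
    apply integrable_finset_sum
    intro j _
    exact (hgint j).const_mul (c j)
  have hpt : ∀ t : ℝ, |(Polynomial.aeval t (Polynomial.hermite (2 * n + 1)) : ℝ)| * stdGauss t
      ≤ B t := by
    intro t
    calc |(Polynomial.aeval t (Polynomial.hermite (2 * n + 1)) : ℝ)| * stdGauss t
        ≤ (∑ j ∈ Finset.range (n + 1), c j * |t| ^ (2 * j + 1)) * stdGauss t :=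
          mul_le_mul_of_nonneg_right (herm_abs_le n t) (stdGauss_nonneg t)
      _ = B t := by
          rw [hBdef, Finset.sum_mul]
          exact Finset.sum_congr rfl fun j _ => by rw [hgdef]; ring
  have hcont : Continuous fun t : ℝ =>
      |(Polynomial.aeval t (Polynomial.hermite (2 * n + 1)) : ℝ)| * stdGauss t := by
    exact ((Polynomial.hermite (2 * n + 1)).continuous_aeval.abs).mul continuous_stdGauss
  have hfint : Integrable fun t : ℝ =>
      |(Polynomial.aeval t (Polynomial.hermite (2 * n + 1)) : ℝ)| * stdGauss t := by
    refine hBint.mono' hcont.aestronglyMeasurable ?_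
    filter_upwards with t
    rw [Real.norm_eq_abs, abs_of_nonneg (mul_nonneg (abs_nonneg _) (stdGauss_nonneg t))]
    exact hpt t
  calc ∫ t : ℝ, |(Polynomial.aeval t (Polynomial.hermite (2 * n + 1)) : ℝ)| * stdGauss t
      ≤ ∫ t : ℝ, B t := integral_mono hfint hBint hpt
    _ = ∑ j ∈ Finset.range (n + 1), c j * ∫ t : ℝ, g j t := by
        rw [hBdef, integral_finset_sum _ (fun j _ => (hgint j).const_mul (c j))]
        exact Finset.sum_congr rfl fun j _ => MeasureTheory.integral_const_mul _ _
    _ ≤ ∑ j ∈ Finset.range (n + 1), (((2 * n + 1)‼ * Nat.choose n j : ℕ) : ℝ) := by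
        apply Finset.sum_le_sum
        intro j hj
        have hj' : j ≤ n := Nat.lt_succ_iff.mp (Finset.mem_range.mp hj)
        calc c j * ∫ t : ℝ, g j t ≤ c j * (2 ^ j * j !) :=
              mul_le_mul_of_nonneg_left (gauss_moment j) (hcnn j)
          _ = (((2 * (n - j) - 1)‼ * Nat.choose (2 * n + 1) (2 * j + 1) * (2 ^ j * j !) : ℕ) : ℝ) := by
              rw [hcdef]; push_cast; ring
          _ ≤ (((2 * n + 1)‼ * Nat.choose n j : ℕ) : ℝ) :=
              Nat.cast_le.mpr (key_nat n j hj')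
    _ = (Nat.doubleFactorial (2 * n + 1) : ℝ) * 2 ^ n := by
        rw [← Nat.cast_sum, ← Finset.mul_sum, Nat.sum_range_choose]
        push_cast; ring
end

section
/- Let d and k be positive integers with k ≥ d. Then ∑_{k - d/2 ≤ k̄₁+...+k̄_d ≤ k} 1/(k̄₁!···k̄_d!) ≤ ⌈d/2⌉! · (d+1)^k / k!, where the sum ranges over d-tuples of nonnegative integers whose sum lies in [k - d/2, k]. -/
/-!
Appending the deficit `k - (k̄₁ + ⋯ + k̄_d)` as a last coordinate maps the tuples of the sum
injectively to the `(d+1)`-tuples of sum `k`, and costs at most a factor `⌈d/2⌉!` per term, because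
the deficit is at most `d/2`. By the multinomial theorem the reciprocal factorial products over all
`(d+1)`-tuples of sum `k` add up to `(d+1)^k / k!`.
-/

open Finset Nat

theorem sum_inv_prod_factorial_piAntidiag {ι K : Type*} [DecidableEq ι] [Field K] [CharZero K]
    (s : Finset ι) (k : ℕ) :
    ∑ g ∈ piAntidiag s k, (∏ i ∈ s, ((g i)! : K))⁻¹ = (#s : K) ^ k / k ! := by
  rw [eq_div_iff (cast_ne_zero.2 (factorial_ne_zero k)), sum_mul]
  have inv_mul_factorial : ∀ g ∈ piAntidiag s k,
      (∏ i ∈ s, ((g i)! : K))⁻¹ * k ! = multinomial s g := by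
    intro g hg
    rw [← (mem_piAntidiag.1 hg).1, ← multinomial_spec, cast_mul, cast_prod, inv_mul_cancel_left₀]
    exact prod_ne_zero_iff.2 fun i _ => cast_ne_zero.2 (factorial_ne_zero _)
  rw [sum_congr rfl inv_mul_factorial]
  simpa using (sum_pow_eq_sum_piAntidiag s (fun _ => (1 : K)) k).symm

theorem sum_inv_prod_factorial_le_of_sub_sum_le (d k r : ℕ) (s : Finset (Fin d → ℕ))
    (hs : ∀ f ∈ s, ∑ i, f i ≤ k ∧ k - ∑ i, f i ≤ r) :
    ∑ f ∈ s, (∏ i, ((f i)! : ℝ))⁻¹ ≤ r ! * (d + 1) ^ k / k ! := by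
  set pad : (Fin d → ℕ) → (Fin (d + 1) → ℕ) := fun f => Fin.snoc f (k - ∑ i, f i)
  have pad_injOn : Set.InjOn pad s := fun f _ g _ h => (Fin.snoc_injective2 h).1
  have pad_mem : ∀ f ∈ s, pad f ∈ piAntidiag univ k := by
    intro f hf
    have := (hs f hf).1
    simp only [pad, mem_piAntidiag, Fin.sum_univ_castSucc, Fin.snoc_castSucc, Fin.snoc_last]
    exact ⟨by omega, fun i _ => mem_univ i⟩
  have inv_prod_le : ∀ f ∈ s, (∏ i, ((f i)! : ℝ))⁻¹ ≤ r ! * (∏ i, ((pad f i)! : ℝ))⁻¹ := by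
    intro f hf
    have prod_pad : ∏ i, ((pad f i)! : ℝ) = (∏ i, ((f i)! : ℝ)) * (k - ∑ i, f i)! := by
      simp only [pad, Fin.prod_univ_castSucc, Fin.snoc_castSucc, Fin.snoc_last]
    rw [prod_pad, mul_inv, mul_left_comm, le_mul_iff_one_le_right (by positivity),
      le_mul_inv_iff₀ (by positivity), one_mul]
    exact_mod_cast factorial_le (hs f hf).2
  calc ∑ f ∈ s, (∏ i, ((f i)! : ℝ))⁻¹
      ≤ ∑ f ∈ s, r ! * (∏ i, ((pad f i)! : ℝ))⁻¹ := sum_le_sum inv_prod_le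
    _ = r ! * ∑ g ∈ s.image pad, (∏ i, ((g i)! : ℝ))⁻¹ := by rw [sum_image pad_injOn, mul_sum]
    _ ≤ r ! * ∑ g ∈ piAntidiag univ k, (∏ i, ((g i)! : ℝ))⁻¹ := by
      gcongr
      exact image_subset_iff.2 pad_mem
    _ = r ! * (d + 1) ^ k / k ! := by
      rw [sum_inv_prod_factorial_piAntidiag, Finset.card_fin, mul_div_assoc]
      push_cast
      rfl

theorem stmt_7_general (d k : ℕ) :
    ∑ f ∈ (Fintype.piFinset fun _ : Fin d => Finset.range (k + 1)).filter
        (fun f => (k : ℝ) - (d : ℝ) / 2 ≤ (∑ i, f i : ℕ) ∧ (∑ i, f i) ≤ k),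
      (∏ i, (Nat.factorial (f i) : ℝ))⁻¹ ≤
    (Nat.factorial ((d + 1) / 2) : ℝ) * (d + 1 : ℝ) ^ k / (Nat.factorial k : ℝ) := by
  refine sum_inv_prod_factorial_le_of_sub_sum_le d k _ _ fun f hf => ?_
  obtain ⟨-, sum_ge, sum_le⟩ := mem_filter.1 hf
  push_cast at sum_ge
  have two_mul_deficit_le : 2 * (k - ∑ i, f i) ≤ d := by
    have : ((2 * (k - ∑ i, f i) : ℕ) : ℝ) ≤ d := by push_cast [Nat.cast_sub sum_le]; linarith
    exact_mod_cast this
  exact ⟨sum_le, by omega⟩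

/-- For positive integers `d ≤ k`, the sum of `1/(k̄₁!⋯k̄_d!)` over `d`-tuples of nonnegative
integers whose sum lies in `[k - d/2, k]` is at most `⌈d/2⌉! (d+1)^k / k!`. -/
theorem stmt_7 (d k : ℕ) (hd : 0 < d) (hk : d ≤ k) :
    ∑ f ∈ (Fintype.piFinset fun _ : Fin d => Finset.range (k + 1)).filter
        (fun f => (k : ℝ) - (d : ℝ) / 2 ≤ (∑ i, f i : ℕ) ∧ (∑ i, f i) ≤ k),
      (∏ i, (Nat.factorial (f i) : ℝ))⁻¹ ≤
    (Nat.factorial ((d + 1) / 2) : ℝ) * (d + 1 : ℝ) ^ k / (Nat.factorial k : ℝ) :=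
  stmt_7_general d k
end

section
/- Let P and Q be probability measures on a measurable space (X, A) with P absolutely continuous with respect to Q, and let Ω ∈ A. Then ∫_Ω (log(dP/dQ))₋ dP ≤ TV(P, Q; Ω), where a₋ := max(0, -a) and TV(P, Q; Ω) := sup_{A ∈ A} |P(A ∩ Ω) - Q(A ∩ Ω)|. -/
open MeasureTheory Real

/-- The conditional total variation distance restricted to a set `Ω`:
`TV(P, Q; Ω) = sup_A |P(A ∩ Ω) - Q(A ∩ Ω)|`. -/
noncomputable def condTV {α : Type*} [MeasurableSpace α] (P Q : Measure α) (Ω : Set α) : ℝ :=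
  ⨆ A : {A : Set α // MeasurableSet A}, |(P ((A : Set α) ∩ Ω)).toReal - (Q ((A : Set α) ∩ Ω)).toReal|

/-- `∫_Ω (log dP/dQ)₋ dP ≤ TV(P, Q; Ω)` for `P ≪ Q`. -/
theorem stmt_9 {α : Type*} [MeasurableSpace α] (P Q : Measure α)
    [IsProbabilityMeasure P] [IsProbabilityMeasure Q] (hPQ : P ≪ Q)
    (Ω : Set α) (hΩ : MeasurableSet Ω) :
    ∫ x in Ω, max 0 (-(Real.log (P.rnDeriv Q x).toReal)) ∂P ≤ condTV P Q Ω := by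
  set f : α → ℝ := fun x => (P.rnDeriv Q x).toReal with hf
  set g : α → ℝ := fun x => max 0 (-(Real.log (f x))) with hg
  have hfmeas : Measurable f := (P.measurable_rnDeriv Q).ennreal_toReal
  have hgmeas : Measurable g :=
    measurable_const.max (hfmeas.log.neg)
  set B : Set α := Ω ∩ {x | P.rnDeriv Q x < 1} with hB
  have hBmeas : MeasurableSet B :=
    hΩ.inter (P.measurable_rnDeriv Q measurableSet_Iio)
  have hBsub : B ⊆ Ω := Set.inter_subset_left
  -- g vanishes outside {rnDeriv < 1}
  have hg_zero : ∀ x, ¬ (P.rnDeriv Q x < 1) → g x = 0 := by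
    intro x hx
    push_neg at hx
    rcases eq_or_ne (P.rnDeriv Q x) ⊤ with h | h
    · simp [hg, hf, h]
    · have : (1 : ℝ) ≤ f x := by
        rw [hf]
        simpa using ENNReal.toReal_mono h hx
      have hlog : 0 ≤ Real.log (f x) := Real.log_nonneg this
      simp [hg, max_eq_left, neg_nonpos.mpr hlog]
  -- restrict the integral to B
  have step1 : ∫ x in Ω, g x ∂P = ∫ x in B, g x ∂P := by
    have h1 : ∫ x in Ω, g x ∂P = ∫ x in Ω, B.indicator g x ∂P := by
      refine setIntegral_congr_fun hΩ fun x hx => ?_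
      by_cases hxB : x ∈ B
      · simp [Set.indicator_of_mem hxB]
      · have hxn : ¬ (P.rnDeriv Q x < 1) := fun h => hxB ⟨hx, h⟩
        simp [Set.indicator_of_notMem hxB, hg_zero x hxn]
    rw [h1, setIntegral_indicator hBmeas, Set.inter_eq_self_of_subset_right hBsub]
  -- change of measure
  have step2 : ∫ x in B, g x ∂P = ∫ x in B, f x * g x ∂Q := by
    rw [← setIntegral_rnDeriv_smul hPQ hBmeas]
    simp [hf, smul_eq_mul]
  -- pointwise bound on B
  have hpt : ∀ x ∈ B, f x * g x ≤ 1 - f x := by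
    intro x hx
    have hlt : f x < 1 := by
      have h2 : P.rnDeriv Q x < 1 := hx.2
      have h3 := (ENNReal.toReal_lt_toReal h2.ne_top (by simp)).mpr h2
      simpa using h3
    have hge : 0 ≤ f x := ENNReal.toReal_nonneg
    rcases eq_or_lt_of_le hge with h0 | h0
    · rw [← h0, zero_mul]
      linarith
    · have hlogneg : Real.log (f x) < 0 := Real.log_neg h0 hlt
      have hgx : g x = -Real.log (f x) := max_eq_right (by linarith)
      have hinv : Real.log (f x)⁻¹ ≤ (f x)⁻¹ - 1 :=
        Real.log_le_sub_one_of_pos (by positivity)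
      rw [Real.log_inv] at hinv
      have hmul := mul_le_mul_of_nonneg_left hinv hge
      rw [mul_sub, mul_inv_cancel₀ h0.ne'] at hmul
      rw [hgx]
      linarith
  have h_int_f : IntegrableOn f B Q :=
    Measure.integrableOn_toReal_rnDeriv (by simp [measure_ne_top])
  have h_int_one_sub : IntegrableOn (fun x => 1 - f x) B Q :=
    (integrableOn_const (measure_ne_top _ _)).sub h_int_f
  have h_int_fg : IntegrableOn (fun x => f x * g x) B Q := by
    refine Integrable.mono' h_int_one_sub ((hfmeas.mul hgmeas).aestronglyMeasurable) ?_
    refine (ae_restrict_iff' hBmeas).mpr (ae_of_all _ fun x hx => ?_)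
    have h1 : 0 ≤ f x * g x :=
      mul_nonneg ENNReal.toReal_nonneg (le_max_left _ _)
    have h2 := hpt x hx
    rw [Real.norm_eq_abs, abs_of_nonneg h1]
    exact h2
  -- integral comparison
  have step3 : ∫ x in B, f x * g x ∂Q ≤ ∫ x in B, (1 - f x) ∂Q :=
    setIntegral_mono_on h_int_fg h_int_one_sub hBmeas hpt
  have step4 : ∫ x in B, (1 - f x) ∂Q = (Q B).toReal - (P B).toReal := by
    rw [integral_sub (integrableOn_const (C := (1:ℝ)) (measure_ne_top _ _)) h_int_f]
    rw [Measure.setIntegral_toReal_rnDeriv hPQ B]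
    simp [Measure.real]
  -- relate to condTV
  have step5 : (Q B).toReal - (P B).toReal ≤ condTV P Q Ω := by
    have hBinter : B ∩ Ω = B := Set.inter_eq_self_of_subset_left hBsub
    have hbdd : BddAbove (Set.range fun A : {A : Set α // MeasurableSet A} =>
        |(P ((A : Set α) ∩ Ω)).toReal - (Q ((A : Set α) ∩ Ω)).toReal|) := by
      refine ⟨2, ?_⟩
      rintro r ⟨A, rfl⟩
      have h1 : (P ((A : Set α) ∩ Ω)).toReal ≤ 1 := by
        have := prob_le_one (μ := P) (s := (A : Set α) ∩ Ω)
        simpa using ENNReal.toReal_mono (by simp) this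
      have h2 : (Q ((A : Set α) ∩ Ω)).toReal ≤ 1 := by
        have := prob_le_one (μ := Q) (s := (A : Set α) ∩ Ω)
        simpa using ENNReal.toReal_mono (by simp) this
      have h3 : (0:ℝ) ≤ (P ((A : Set α) ∩ Ω)).toReal := ENNReal.toReal_nonneg
      have h4 : (0:ℝ) ≤ (Q ((A : Set α) ∩ Ω)).toReal := ENNReal.toReal_nonneg
      rw [abs_sub_le_iff]
      constructor <;> linarith
    have hle := le_ciSup hbdd (⟨B, hBmeas⟩ : {A : Set α // MeasurableSet A})
    rw [condTV]
    refine le_trans ?_ hle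
    simp only [hBinter]
    rw [abs_sub_comm]
    exact le_abs_self _
  calc ∫ x in Ω, g x ∂P = ∫ x in B, g x ∂P := step1
    _ = ∫ x in B, f x * g x ∂Q := step2
    _ ≤ ∫ x in B, (1 - f x) ∂Q := step3
    _ = (Q B).toReal - (P B).toReal := step4
    _ ≤ condTV P Q Ω := step5
end

section
/- Let P ≪ Q be probability measures with P(Ω) = Q(Ω) for a measurable set Ω, with densities p, q relative to a common dominating measure, and let P_j be a probability measure with (for each j) K(P_j, P₀; Ω) finite. Then ∫_Ω ((log(dP/dQ))₊) dP ≤ K(P, Q; Ω) + √(K(P, Q; Ω)/2), where a₊ = max(a, 0) and K(P, Q; Ω) := ∫_Ω log(dP/dQ) dP. -/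
open Real Set

private lemma hasDerivAt_h {x : ℝ} (hx : x ≠ 0) :
    HasDerivAt (fun x : ℝ => (x+1) * Real.log x - 2*(x-1)) (Real.log x + (x+1)/x - 2) x := by
  have h1 : HasDerivAt (fun x : ℝ => (x+1) * Real.log x) (1 * Real.log x + (x+1) * x⁻¹) x :=
    ((hasDerivAt_id x).add_const 1).mul (Real.hasDerivAt_log hx)
  have h2 : HasDerivAt (fun x : ℝ => 2*(x-1)) 2 x := by
    simpa using ((hasDerivAt_id x).sub_const 1).const_mul 2
  refine HasDerivAt.congr_deriv (h1.sub h2) ?_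
  ring

private lemma h_cont : ContinuousOn (fun x : ℝ => (x+1) * Real.log x - 2*(x-1)) (Ioi 0) := by
  apply ContinuousOn.sub
  · exact (continuousOn_id.add continuousOn_const).mul
      (Real.continuousOn_log.mono (by intro x hx; simpa using (ne_of_gt hx)))
  · fun_prop

private lemma h_mono : MonotoneOn (fun x : ℝ => (x+1) * Real.log x - 2*(x-1)) (Ioi 0) := by
  apply monotoneOn_of_deriv_nonneg (convex_Ioi 0) h_cont
  · intro x hx
    rw [interior_Ioi] at hx
    exact (hasDerivAt_h (ne_of_gt hx)).differentiableAt.differentiableWithinAt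
  · intro x hx
    rw [interior_Ioi] at hx
    rw [(hasDerivAt_h (ne_of_gt hx)).deriv]
    have h1 : 1 - x⁻¹ ≤ Real.log x := Real.one_sub_inv_le_log_of_pos hx
    have : (x+1)/x = 1 + x⁻¹ := by rw [add_div, div_self (ne_of_gt (mem_Ioi.1 hx)), one_div]
    rw [this]
    linarith

private lemma hasDerivAt_g {x : ℝ} (hx : x ≠ 0) :
    HasDerivAt (fun x : ℝ => 2*(x+2)*(x*Real.log x - x + 1) - 3*(x-1)^2)
      (4 * ((x+1) * Real.log x - 2*(x-1))) x := by
  have h1 : HasDerivAt (fun x : ℝ => x*Real.log x - x + 1) (Real.log x + 1 - 1) x :=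
    ((Real.hasDerivAt_mul_log hx).sub (hasDerivAt_id x)).add_const 1
  have h2 : HasDerivAt (fun x : ℝ => 2*(x+2)) 2 x := by
    simpa using ((hasDerivAt_id x).add_const 2).const_mul 2
  have h3 : HasDerivAt (fun x : ℝ => 3*(x-1)^2) (3*(2*(x-1))) x := by
    simpa using (((hasDerivAt_id x).sub_const 1).pow 2).const_mul 3
  refine HasDerivAt.congr_deriv ((h2.mul h1).sub h3) ?_
  ring

private lemma g_cont : ContinuousOn (fun x : ℝ => 2*(x+2)*(x*Real.log x - x + 1) - 3*(x-1)^2)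
    {x : ℝ | x ≠ 0} := by
  have : ContinuousOn Real.log {x : ℝ | x ≠ 0} := Real.continuousOn_log
  fun_prop

lemma pinsker_kern {x : ℝ} (hx : 0 ≤ x) :
    3*(x-1)^2 ≤ 2*(x+2)*(x*Real.log x - x + 1) := by
  rcases eq_or_lt_of_le hx with h0 | h0
  · simp [← h0]; norm_num
  have key : 0 ≤ 2*(x+2)*(x*Real.log x - x + 1) - 3*(x-1)^2 := by
    set g := fun x : ℝ => 2*(x+2)*(x*Real.log x - x + 1) - 3*(x-1)^2 with hg
    have hg1 : g 1 = 0 := by simp [hg]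
    rcases le_total x 1 with hx1 | hx1
    · have anti : AntitoneOn g (Ioc 0 1) := by
        apply antitoneOn_of_deriv_nonpos (convex_Ioc 0 1)
          (g_cont.mono (by intro y hy; exact ne_of_gt hy.1))
        · intro y hy
          rw [interior_Ioc] at hy
          exact (hasDerivAt_g (ne_of_gt hy.1)).differentiableAt.differentiableWithinAt
        · intro y hy
          rw [interior_Ioc] at hy
          rw [(hasDerivAt_g (ne_of_gt hy.1)).deriv]
          have := h_mono (mem_Ioi.2 hy.1) (mem_Ioi.2 one_pos) (le_of_lt hy.2)
          simp only [Real.log_one] at this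
          linarith
      have := anti (mem_Ioc.2 ⟨h0, hx1⟩) (mem_Ioc.2 ⟨one_pos, le_refl 1⟩) hx1
      rw [hg1] at this; simpa [hg] using this
    · have mono : MonotoneOn g (Ici 1) := by
        apply monotoneOn_of_deriv_nonneg (convex_Ici 1)
          (g_cont.mono (by intro y hy; simp only [mem_Ici] at hy; simp only [mem_setOf_eq]; intro h; linarith [h ▸ hy]))
        · intro y hy
          rw [interior_Ici] at hy
          exact (hasDerivAt_g (ne_of_gt (lt_trans one_pos hy))).differentiableAt.differentiableWithinAt
        · intro y hy
          rw [interior_Ici] at hy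
          rw [(hasDerivAt_g (ne_of_gt (lt_trans one_pos hy))).deriv]
          have := h_mono (mem_Ioi.2 one_pos) (mem_Ioi.2 (lt_trans one_pos hy)) (le_of_lt hy)
          simp only [Real.log_one] at this
          linarith
      have := mono (mem_Ici.2 le_rfl) (mem_Ici.2 hx1) hx1
      rw [hg1] at this; simpa [hg] using this
  linarith

open MeasureTheory

/-- The conditional Kullback divergence `K(P, Q; Ω) = ∫_Ω log(dP/dQ) dP`. -/
noncomputable def condKL {α : Type*} [MeasurableSpace α] (P Q : Measure α) (Ω : Set α) : ℝ :=
  ∫ x in Ω, Real.log (P.rnDeriv Q x).toReal ∂P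

private lemma lem_neg {y : ℝ} (hy : 0 ≤ y) :
    y * max (-(Real.log y)) 0 ≤ max (1 - y) 0 := by
  rcases le_or_gt 1 y with h1 | h1
  · have : Real.log y ≥ 0 := Real.log_nonneg h1
    rw [max_eq_right (by linarith : -(Real.log y) ≤ 0)]
    simp [le_max_right]
  · rcases eq_or_lt_of_le hy with h0 | h0
    · simp [← h0]
    · have hlog : 1 - y⁻¹ ≤ Real.log y := Real.one_sub_inv_le_log_of_pos h0
      have hyinv : y * y⁻¹ = 1 := mul_inv_cancel₀ (ne_of_gt h0)
      rcases le_or_gt (-(Real.log y)) 0 with h2 | h2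
      · rw [max_eq_right h2]
        simp [le_max_right]
      · rw [max_eq_left (le_of_lt h2)]
        have : y * (-(Real.log y)) ≤ y * (y⁻¹ - 1) := by
          apply mul_le_mul_of_nonneg_left (by linarith) hy
        have h3 : y * (y⁻¹ - 1) = 1 - y := by rw [mul_sub, hyinv]; ring
        have h4 : 1 - y ≤ max (1 - y) 0 := le_max_left _ _
        linarith

private lemma lem_phi_nonneg {y : ℝ} (hy : 0 ≤ y) : 0 ≤ y * Real.log y - y + 1 := by
  have h := pinsker_kern hy
  nlinarith [sq_nonneg (y - 1)]

private lemma lem_sq_div {y : ℝ} (hy : 0 ≤ y) :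
    (y - 1)^2 / (y + 2) ≤ (2/3) * (y * Real.log y - y + 1) := by
  rw [div_le_iff₀ (by linarith : (0:ℝ) < y + 2)]
  have h := pinsker_kern hy
  nlinarith

private lemma lem_abs_id (y : ℝ) : |y - 1| = (y - 1) + 2 * max (1 - y) 0 := by
  rcases le_total 1 y with h | h
  · rw [abs_of_nonneg (by linarith), max_eq_right (by linarith)]; ring
  · rw [abs_of_nonpos (by linarith), max_eq_left (by linarith)]; ring

/-- If `P ≪ Q` and `P(Ω) = Q(Ω)`, then
`∫_Ω (log dP/dQ)₊ dP ≤ K(P, Q; Ω) + √(K(P, Q; Ω)/2)`. -/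
theorem stmt_17 {α : Type*} [MeasurableSpace α] (P Q : Measure α)
    [IsProbabilityMeasure P] [IsProbabilityMeasure Q] (hPQ : P ≪ Q)
    (Ω : Set α) (hΩ : MeasurableSet Ω) (hmass : P Ω = Q Ω) :
    ∫ x in Ω, max (Real.log (P.rnDeriv Q x).toReal) 0 ∂P ≤
      condKL P Q Ω + Real.sqrt (condKL P Q Ω / 2) := by
  unfold condKL
  set f : α → ℝ := fun x => (P.rnDeriv Q x).toReal with hfdef
  have hfm : Measurable f := (Measure.measurable_rnDeriv P Q).ennreal_toReal
  have hf0 : ∀ x, 0 ≤ f x := fun _ => ENNReal.toReal_nonneg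
  have hLm : Measurable fun x => Real.log (f x) := Real.measurable_log.comp hfm
  set N : α → ℝ := fun x => max (-(Real.log (f x))) 0 with hNdef
  have hNm : Measurable N := (hLm.neg).max measurable_const
  have hN0 : ∀ x, 0 ≤ N x := fun x => le_max_right _ _
  -- transfer lemmas
  have hν : P.restrict Ω = (Q.restrict Ω).withDensity (P.rnDeriv Q) := by
    have h1 : (Q.withDensity (P.rnDeriv Q)).restrict Ω = (Q.restrict Ω).withDensity (P.rnDeriv Q) :=
      restrict_withDensity hΩ _
    rw [Measure.withDensity_rnDeriv_eq P Q hPQ] at h1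
    exact h1
  have hlt : ∀ᵐ x ∂(Q.restrict Ω), P.rnDeriv Q x < ⊤ :=
    ae_restrict_of_ae (Measure.rnDeriv_lt_top P Q)
  have htrans : ∀ g : α → ℝ, Integrable (fun x => f x * g x) (Q.restrict Ω) ↔
      Integrable g (P.restrict Ω) := by
    intro g
    rw [hν]
    simpa [smul_eq_mul] using
      (integrable_withDensity_iff_integrable_smul' (Measure.measurable_rnDeriv P Q) hlt
        (g := g)).symm
  have hieq : ∀ g : α → ℝ, ∫ x in Ω, g x ∂P = ∫ x in Ω, f x * g x ∂Q := by
    intro g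
    simpa [smul_eq_mul] using (setIntegral_rnDeriv_smul hPQ hΩ (f := g)).symm
  -- integrability of the negative part
  have hNμint : Integrable (fun x => f x * N x) (Q.restrict Ω) := by
    refine Integrable.mono' (integrable_const (1:ℝ))
      ((hfm.mul hNm).aestronglyMeasurable) ?_
    filter_upwards with x
    rw [Real.norm_eq_abs, abs_of_nonneg (mul_nonneg (hf0 x) (hN0 x))]
    calc f x * N x ≤ max (1 - f x) 0 := lem_neg (hf0 x)
      _ ≤ 1 := max_le (by linarith [hf0 x]) one_pos.le
  have hNint : Integrable N (P.restrict Ω) := (htrans N).1 hNμint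
  by_cases hK : Integrable (fun x => Real.log (f x)) (P.restrict Ω)
  · -- integrable case
    have hposint : Integrable (fun x => max (Real.log (f x)) 0) (P.restrict Ω) := by
      have h : (fun x => max (Real.log (f x)) 0) = fun x => Real.log (f x) + N x := by
        funext x
        have := max_zero_sub_max_neg_zero_eq_self (Real.log (f x))
        simp only [hNdef]; linarith
      rw [h]; exact hK.add hNint
    have hsplit : ∫ x in Ω, max (Real.log (f x)) 0 ∂P
        = (∫ x in Ω, Real.log (f x) ∂P) + ∫ x in Ω, N x ∂P := by
      rw [← integral_add hK hNint]
      apply integral_congr_ae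
      filter_upwards with x
      have := max_zero_sub_max_neg_zero_eq_self (Real.log (f x))
      simp only [hNdef]; linarith
    rw [hsplit]
    have hmain : ∫ x in Ω, N x ∂P ≤ Real.sqrt ((∫ x in Ω, Real.log (f x) ∂P) / 2) := by
      set K := ∫ x in Ω, Real.log (f x) ∂P with hKdef
      -- basic integrals over Q.restrict Ω
      have hfint : Integrable f (Q.restrict Ω) :=
        (Measure.integrable_toReal_rnDeriv (μ := P) (ν := Q)).restrict
      have hIf : ∫ x in Ω, f x ∂Q = (Q Ω).toReal := by
        rw [Measure.setIntegral_toReal_rnDeriv hPQ Ω, measureReal_def, hmass]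
      have hIc : ∫ _x in Ω, (1:ℝ) ∂Q = (Q Ω).toReal := by simp [measureReal_def]
      -- K in terms of Q
      have hfLμ : Integrable (fun x => f x * Real.log (f x)) (Q.restrict Ω) := (htrans _).2 hK
      have hKQ : K = ∫ x in Ω, f x * Real.log (f x) ∂Q := hieq _
      have hφint : Integrable (fun x => f x * Real.log (f x) - f x + 1) (Q.restrict Ω) :=
        (hfLμ.sub hfint).add (integrable_const 1)
      have hsubint : Integrable (fun x => f x * Real.log (f x) - f x) (Q.restrict Ω) :=
        hfLμ.sub hfint
      have hφeq : ∫ x in Ω, (f x * Real.log (f x) - f x + 1) ∂Q = K := by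
        rw [integral_add hsubint (integrable_const 1), integral_sub hfLμ hfint,
          hIf, ← hKQ, hIc]
        ring
      have hKnonneg : 0 ≤ K := by
        rw [← hφeq]
        exact integral_nonneg fun x => lem_phi_nonneg (hf0 x)
      -- step 1 : ∫ N dP ≤ ∫ (1-f)₊ dQ
      have hposμ : Integrable (fun x => max (1 - f x) 0) (Q.restrict Ω) := by
        refine Integrable.mono' (integrable_const (1:ℝ))
          (((measurable_const.sub hfm).max measurable_const).aestronglyMeasurable) ?_
        filter_upwards with x
        rw [Real.norm_eq_abs, abs_of_nonneg (le_max_right _ _)]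
        exact max_le (by linarith [hf0 x]) one_pos.le
      have hstep1 : ∫ x in Ω, N x ∂P ≤ ∫ x in Ω, max (1 - f x) 0 ∂Q := by
        rw [hieq N]
        exact integral_mono hNμint hposμ fun x => lem_neg (hf0 x)
      -- step 2 : ∫ (1-f)₊ dQ = (1/2) ∫ |f-1| dQ
      have hsub1int : Integrable (fun x => f x - 1) (Q.restrict Ω) :=
        hfint.sub (integrable_const 1)
      have habs : Integrable (fun x => |f x - 1|) (Q.restrict Ω) := hsub1int.abs
      have hstep2 : ∫ x in Ω, |f x - 1| ∂Q = 2 * ∫ x in Ω, max (1 - f x) 0 ∂Q := by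
        have h1 : ∫ x in Ω, |f x - 1| ∂Q
            = ∫ x in Ω, ((f x - 1) + 2 * max (1 - f x) 0) ∂Q :=
          integral_congr_ae (by filter_upwards with x; exact lem_abs_id (f x))
        have h2max : Integrable (fun x => 2 * max (1 - f x) 0) (Q.restrict Ω) :=
          hposμ.const_mul 2
        rw [h1, integral_add hsub1int h2max, integral_sub hfint (integrable_const 1), hIf,
          integral_const_mul, hIc]
        ring
      -- Cauchy-Schwarz
      set u : α → ℝ := fun x => |f x - 1| / Real.sqrt (f x + 2) with hudef
      set v : α → ℝ := fun x => Real.sqrt (f x + 2) with hvdef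
      have hf2pos : ∀ x, (0:ℝ) < f x + 2 := fun x => by linarith [hf0 x]
      have hvpos : ∀ x, 0 < v x := fun x => Real.sqrt_pos.2 (hf2pos x)
      have huv : ∀ x, u x * v x = |f x - 1| := fun x =>
        div_mul_cancel₀ _ (ne_of_gt (hvpos x))
      have hu2 : ∀ x, u x ^ (2:ℕ) = (f x - 1)^2 / (f x + 2) := by
        intro x
        rw [hudef]
        rw [div_pow, sq_abs, Real.sq_sqrt (le_of_lt (hf2pos x))]
      have hv2 : ∀ x, v x ^ (2:ℕ) = f x + 2 := fun x =>
        Real.sq_sqrt (le_of_lt (hf2pos x))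
      have hum : Measurable u := (hfm.sub measurable_const).abs.div
        (Real.continuous_sqrt.measurable.comp (hfm.add measurable_const))
      have hvm : Measurable v := Real.continuous_sqrt.measurable.comp (hfm.add measurable_const)
      have hu2int : Integrable (fun x => (f x - 1)^2 / (f x + 2)) (Q.restrict Ω) := by
        refine Integrable.mono' habs
          (((hfm.sub measurable_const).pow_const 2 |>.div
            (hfm.add measurable_const)).aestronglyMeasurable) ?_
        filter_upwards with x
        rw [Real.norm_eq_abs, abs_of_nonneg (div_nonneg (sq_nonneg _) (le_of_lt (hf2pos x)))]
        rw [div_le_iff₀ (hf2pos x)]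
        have h2 : |f x - 1| ≤ f x + 2 := abs_le.2 ⟨by linarith [hf0 x], by linarith⟩
        calc (f x - 1)^2 = |f x - 1| * |f x - 1| := by rw [← sq_abs]; ring
          _ ≤ |f x - 1| * (f x + 2) := mul_le_mul_of_nonneg_left h2 (abs_nonneg _)
      have hv2int : Integrable (fun x => f x + 2) (Q.restrict Ω) :=
        hfint.add (integrable_const 2)
      have hMu : MemLp u (ENNReal.ofReal 2) (Q.restrict Ω) := by
        rw [show ENNReal.ofReal 2 = 2 by norm_num]
        rw [memLp_two_iff_integrable_sq hum.aestronglyMeasurable]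
        have : (fun x => u x ^ (2:ℕ)) = fun x => (f x - 1)^2 / (f x + 2) := funext hu2
        rw [this]; exact hu2int
      have hMv : MemLp v (ENNReal.ofReal 2) (Q.restrict Ω) := by
        rw [show ENNReal.ofReal 2 = 2 by norm_num]
        rw [memLp_two_iff_integrable_sq hvm.aestronglyMeasurable]
        have : (fun x => v x ^ (2:ℕ)) = fun x => f x + 2 := funext hv2
        rw [this]; exact hv2int
      have hCS := integral_mul_le_Lp_mul_Lq_of_nonneg
        Real.HolderConjugate.two_two
        (Filter.Eventually.of_forall fun x => div_nonneg (abs_nonneg _) (Real.sqrt_nonneg _))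
        (Filter.Eventually.of_forall fun x => Real.sqrt_nonneg _) hMu hMv
      -- rewrite CS in terms of sqrt
      have hrpow2 : ∀ y : ℝ, y ^ (2:ℝ) = y ^ (2:ℕ) := fun y => by
        rw [← Real.rpow_natCast y 2]; norm_num
      have hIu2 : ∫ x in Ω, u x ^ (2:ℝ) ∂Q = ∫ x in Ω, (f x - 1)^2 / (f x + 2) ∂Q := by
        apply integral_congr_ae
        filter_upwards with x
        rw [hrpow2, hu2]
      have hIv2 : ∫ x in Ω, v x ^ (2:ℝ) ∂Q = 3 * (Q Ω).toReal := by
        have h1 : ∫ x in Ω, v x ^ (2:ℝ) ∂Q = ∫ x in Ω, (f x + 2) ∂Q := by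
          apply integral_congr_ae
          filter_upwards with x
          rw [hrpow2, hv2]
        rw [h1, integral_add hfint (integrable_const 2), hIf, setIntegral_const,
          measureReal_def, smul_eq_mul]
        ring
      have huvI : ∫ x in Ω, |f x - 1| ∂Q = ∫ x in Ω, u x * v x ∂Q :=
        integral_congr_ae (by filter_upwards with x; exact (huv x).symm)
      -- bound the two factors
      have hbound1 : ∫ x in Ω, u x ^ (2:ℝ) ∂Q ≤ (2/3) * K := by
        rw [hIu2, ← hφeq, ← integral_const_mul]
        exact integral_mono hu2int (hφint.const_mul _) fun x => lem_sq_div (hf0 x)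
      have hbound2 : ∫ x in Ω, v x ^ (2:ℝ) ∂Q ≤ 3 := by
        rw [hIv2]
        have : (Q Ω).toReal ≤ 1 := by
          have := measure_mono (Set.subset_univ Ω) (μ := Q)
          simp only [measure_univ] at this
          exact ENNReal.toReal_le_of_le_ofReal one_pos.le (by simpa using this)
        linarith
      have hu2nonneg : 0 ≤ ∫ x in Ω, u x ^ (2:ℝ) ∂Q := by
        rw [hIu2]
        exact integral_nonneg fun x => div_nonneg (sq_nonneg _) (le_of_lt (hf2pos x))
      have hfin : ∫ x in Ω, |f x - 1| ∂Q ≤ Real.sqrt (2 * K) := by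
        rw [huvI]
        calc ∫ x in Ω, u x * v x ∂Q
            ≤ (∫ x in Ω, u x ^ (2:ℝ) ∂Q) ^ ((1:ℝ)/2) * (∫ x in Ω, v x ^ (2:ℝ) ∂Q) ^ ((1:ℝ)/2) :=
              hCS
          _ = Real.sqrt (∫ x in Ω, u x ^ (2:ℝ) ∂Q) * Real.sqrt (∫ x in Ω, v x ^ (2:ℝ) ∂Q) := by
              rw [← Real.sqrt_eq_rpow, ← Real.sqrt_eq_rpow]
          _ ≤ Real.sqrt ((2/3) * K) * Real.sqrt 3 := by
              apply mul_le_mul (Real.sqrt_le_sqrt hbound1) (Real.sqrt_le_sqrt hbound2)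
                (Real.sqrt_nonneg _) (Real.sqrt_nonneg _)
          _ = Real.sqrt ((2/3) * K * 3) := (Real.sqrt_mul (by positivity) 3).symm
          _ = Real.sqrt (2 * K) := by ring_nf
      -- put everything together
      have hhalf : Real.sqrt (2 * K) / 2 = Real.sqrt (K / 2) := by
        rw [show (2:ℝ) * K = (K/2) * 4 by ring, Real.sqrt_mul (by linarith : (0:ℝ) ≤ K/2) 4,
          show Real.sqrt 4 = 2 by
            rw [show (4:ℝ) = 2^2 by norm_num, Real.sqrt_sq (by norm_num : (0:ℝ) ≤ 2)]]
        ring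
      calc ∫ x in Ω, N x ∂P ≤ ∫ x in Ω, max (1 - f x) 0 ∂Q := hstep1
        _ = (∫ x in Ω, |f x - 1| ∂Q) / 2 := by rw [hstep2]; ring
        _ ≤ Real.sqrt (2 * K) / 2 := by linarith
        _ = Real.sqrt (K / 2) := hhalf
    linarith
  · -- non-integrable case : both sides are 0
    have hposn : ¬ Integrable (fun x => max (Real.log (f x)) 0) (P.restrict Ω) := by
      intro h
      apply hK
      have heq : (fun x => Real.log (f x)) = fun x => max (Real.log (f x)) 0 - N x := by
        funext x
        have := max_zero_sub_max_neg_zero_eq_self (Real.log (f x))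
        simp only [hNdef]; linarith
      rw [heq]
      exact h.sub hNint
    rw [integral_undef hposn, integral_undef hK]
    simp
end
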